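/- Optimality of dictators for NICD on the path. Fix ρ ∈ (0,1), n ≥ 1, ℓ ≥ 1, and integers d_1,…,d_ℓ ≥ 1. Let z_0,…,z_ℓ be {-1,1}^n-valued random variables with joint distribution Pr[z_0 = x_0,…,z_ℓ = x_ℓ] = 2^{-n}·∏_{j=1}^ℓ ∏_{i=1}^n (1/2 + (ρ^{d_j}/2)·x_{j-1,i}·x_{j,i}) (i.e., z_0 is uniform and z_j is a ρ^{d_j}-correlated copy of z_{j-1}). Then for all balanced functions f_0, f_1, …, f_ℓ : {-1,1}^n → {-1,1}: Pr[f_0(z_0) = f_1(z_1) = ⋯ = f_ℓ(z_ℓ)] ≤ ∏_{j=1}^ℓ (1/2 + (1/2)·ρ^{d_j}). Moreover, equality holds when all f_j are the same dictator function f_j(x) = x_i for a fixed coordinate i. -/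

import Mathlib

open Finset Real

noncomputable section

/-- The sign of a Boolean bit: `true ↦ 1`, `false ↦ -1`. -/
def sgn (b : Bool) : ℝ := if b then 1 else -1

/-- `∏ᵢ (1/2 + (η/2) xᵢ yᵢ)`: the conditional probability that an `η`-correlated copy
of `x` equals `y`. -/
def corrWeight {n : ℕ} (η : ℝ) (x y : Fin n → Bool) : ℝ :=
  ∏ i, (1 / 2 + (η / 2) * sgn (x i) * sgn (y i))

/-- A Boolean function on the cube is balanced if it takes each value on exactly
half of the `2^n` points. -/
def IsBalanced {n : ℕ} (f : (Fin n → Bool) → Bool) : Prop :=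
  2 * (Finset.univ.filter fun x => f x = true).card = 2 ^ n

namespace NICD

abbrev Cube (n : ℕ) := Fin n → Bool

def Tsum {n : ℕ} (η : ℝ) (φ : Cube n → ℝ) (x : Cube n) : ℝ := ∑ y, corrWeight η x y * φ y

lemma sum_cons {m : ℕ} {α : Type*} [Fintype α] (F : (Fin (m + 1) → α) → ℝ) :
    ∑ x : Fin (m + 1) → α, F x = ∑ a : α, ∑ y : Fin m → α, F (Fin.cons a y) := by
  rw [← (Fin.consEquiv (fun _ : Fin (m + 1) => α)).sum_comp F, Fintype.sum_prod_type]
  rfl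

lemma corrWeight_cons {n : ℕ} (η : ℝ) (a b : Bool) (x y : Cube n) :
    corrWeight η (Fin.cons a x) (Fin.cons b y)
      = (1 / 2 + η / 2 * sgn a * sgn b) * corrWeight η x y := by
  unfold corrWeight
  rw [Fin.prod_univ_succ]
  simp

lemma corrWeight_symm {n : ℕ} (η : ℝ) (x y : Cube n) :
    corrWeight η x y = corrWeight η y x := by
  unfold corrWeight
  exact Finset.prod_congr rfl fun i _ => by ring

lemma rowsum {n : ℕ} (η : ℝ) (x : Cube n) : ∑ y, corrWeight η x y = 1 := by
  induction n with
  | zero => rw [Fintype.sum_unique]; simp [corrWeight]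
  | succ n ih =>
    rw [← Fin.cons_self_tail x, sum_cons (fun y => corrWeight η (Fin.cons (x 0) (Fin.tail x)) y),
      Fintype.sum_bool]
    have h : ∀ a : Bool, ∑ y : Cube n, corrWeight η (Fin.cons (x 0) (Fin.tail x)) (Fin.cons a y)
        = (1 / 2 + η / 2 * sgn (x 0) * sgn a) := by
      intro a
      simp_rw [corrWeight_cons, ← Finset.mul_sum, ih, mul_one]
    rw [h true, h false]
    cases hx : x 0 <;> simp [sgn] <;> ring

lemma halfrow {n : ℕ} (η : ℝ) (i : Fin n) (s : Bool) (x : Cube n) :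
    ∑ y, corrWeight η x y * (if y i = s then (1 : ℝ) else 0)
      = 1 / 2 + η / 2 * sgn (x i) * sgn s := by
  induction n with
  | zero => exact i.elim0
  | succ n ih =>
    rw [← Fin.cons_self_tail x]
    rw [sum_cons (fun y => corrWeight η (Fin.cons (x 0) (Fin.tail x)) y * (if y i = s then (1:ℝ) else 0)),
      Fintype.sum_bool]
    induction i using Fin.cases with
    | zero =>
      simp_rw [corrWeight_cons, Fin.cons_zero]
      have h : ∀ a : Bool, ∑ y : Cube n,
          (1 / 2 + η / 2 * sgn (x 0) * sgn a) * corrWeight η (Fin.tail x) y * (if a = s then (1:ℝ) else 0)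
          = (1 / 2 + η / 2 * sgn (x 0) * sgn a) * (if a = s then (1:ℝ) else 0) := by
        intro a
        rw [← Finset.sum_mul, ← Finset.mul_sum, rowsum, mul_one]
      rw [h true, h false]
      cases s <;> cases hx : x 0 <;> (try simp [sgn]) <;> (try ring)
    | succ j =>
      simp_rw [corrWeight_cons, Fin.cons_succ]
      have h : ∀ a : Bool, ∑ y : Cube n,
          (1 / 2 + η / 2 * sgn (x 0) * sgn a) * corrWeight η (Fin.tail x) y * (if y j = s then (1:ℝ) else 0)
          = (1 / 2 + η / 2 * sgn (x 0) * sgn a) * (1 / 2 + η / 2 * sgn (Fin.tail x j) * sgn s) := by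
        intro a
        simp_rw [mul_assoc, ← Finset.mul_sum]
        rw [ih j (Fin.tail x)]
        ring
      rw [h true, h false]
      cases hx : x 0 <;> simp [sgn] <;> ring

lemma semigroup {n : ℕ} (ν : ℝ) (x z : Cube n) :
    ∑ y, corrWeight ν x y * corrWeight ν y z = corrWeight (ν ^ 2) x z := by
  induction n with
  | zero =>
    rw [Fintype.sum_unique]
    simp [corrWeight]
  | succ n ih =>
    rw [← Fin.cons_self_tail x, ← Fin.cons_self_tail z]
    rw [sum_cons (fun y => corrWeight ν (Fin.cons (x 0) (Fin.tail x)) y *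
      corrWeight ν y (Fin.cons (z 0) (Fin.tail z))), Fintype.sum_bool]
    have h : ∀ a : Bool, ∑ y : Cube n,
        corrWeight ν (Fin.cons (x 0) (Fin.tail x)) (Fin.cons a y) *
          corrWeight ν (Fin.cons a y) (Fin.cons (z 0) (Fin.tail z))
        = ((1 / 2 + ν / 2 * sgn (x 0) * sgn a) * (1 / 2 + ν / 2 * sgn a * sgn (z 0))) *
            corrWeight (ν ^ 2) (Fin.tail x) (Fin.tail z) := by
      intro a
      simp_rw [corrWeight_cons]
      rw [← ih]
      rw [Finset.mul_sum]
      exact Finset.sum_congr rfl fun y _ => by ring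
    rw [h true, h false, corrWeight_cons]
    have hs : ∀ b : Bool, sgn b * sgn b = 1 := by intro b; cases b <;> simp [sgn]
    cases hx : x 0 <;> cases hz : z 0 <;> simp [sgn] <;> ring

lemma Tsum_Tsum {n : ℕ} (ν : ℝ) (φ : Cube n → ℝ) (x : Cube n) :
    Tsum ν (Tsum ν φ) x = Tsum (ν ^ 2) φ x := by
  unfold Tsum
  simp_rw [Finset.mul_sum]
  rw [Finset.sum_comm]
  simp_rw [← mul_assoc, ← Finset.sum_mul, semigroup]

lemma selfadj {n : ℕ} (η : ℝ) (φ ψ : Cube n → ℝ) :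
    ∑ x, φ x * Tsum η ψ x = ∑ x, Tsum η φ x * ψ x := by
  unfold Tsum
  simp_rw [Finset.mul_sum, Finset.sum_mul]
  rw [Finset.sum_comm]
  refine Finset.sum_congr rfl fun y _ => Finset.sum_congr rfl fun x _ => ?_
  rw [corrWeight_symm]
  ring


-- Cauchy-Schwarz with ones
lemma csone {n : ℕ} (Q : Cube n → ℝ) :
    (∑ x, Q x) ^ 2 ≤ (∑ x, (Q x) ^ 2) * 2 ^ n := by
  have h := Finset.sum_mul_sq_le_sq_mul_sq Finset.univ Q (fun _ => (1 : ℝ))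
  simp only [mul_one, one_pow] at h
  have hcard : (∑ _x : Cube n, (1 : ℝ)) = 2 ^ n := by
    rw [Finset.sum_const, Finset.card_univ]
    simp [Fintype.card_fun]
  rw [hcard] at h
  exact h

lemma lemE {n : ℕ} (ν : ℝ) (hν : ν ^ 2 ≤ 1) (W : Cube n → ℝ) :
    (∑ x, (Tsum ν W x) ^ 2) * 2 ^ n
      ≤ (∑ x, W x) ^ 2 + ν ^ 2 * ((∑ x, (W x) ^ 2) * 2 ^ n - (∑ x, W x) ^ 2) := by
  induction n with
  | zero =>
    have hx0 : ∀ x y : Cube 0, x = y := fun x y => funext fun i => i.elim0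
    have hsum : ∀ (G : Cube 0 → ℝ) (x0 : Cube 0), (∑ x, G x) = G x0 := by
      intro G x0
      rw [Fintype.sum_unique]
      exact congrArg G (hx0 _ _)
    set x0 : Cube 0 := fun i => i.elim0 with hx0def
    have hT : Tsum ν W x0 = W x0 := by
      unfold Tsum
      rw [hsum (fun y => corrWeight ν x0 y * W y) x0]
      simp [corrWeight]
    rw [hsum (fun x => (Tsum ν W x) ^ 2) x0, hsum W x0, hsum (fun x => (W x) ^ 2) x0, hT]
    simp
  | succ n ih =>
    set P : Cube n → ℝ := fun y => (W (Fin.cons true y) + W (Fin.cons false y)) / 2 with hP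
    set Q : Cube n → ℝ := fun y => (W (Fin.cons true y) - W (Fin.cons false y)) / 2 with hQ
    have hTc : ∀ (c : Bool) (x' : Cube n),
        Tsum ν W (Fin.cons c x') = Tsum ν P x' + ν * sgn c * Tsum ν Q x' := by
      intro c x'
      unfold Tsum
      rw [sum_cons (fun y => corrWeight ν (Fin.cons c x') y * W y), Fintype.sum_bool]
      simp_rw [corrWeight_cons]
      simp only [Finset.mul_sum, ← Finset.sum_add_distrib]
      refine Finset.sum_congr rfl fun y _ => ?_
      rw [hP, hQ]
      cases c <;> simp [sgn] <;> ring
    have eW : (∑ x, W x) = 2 * ∑ y, P y := by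
      rw [sum_cons W, Fintype.sum_bool]
      simp only [Finset.mul_sum, ← Finset.sum_add_distrib]
      exact Finset.sum_congr rfl fun y _ => by rw [hP]; ring
    have eW2 : (∑ x, (W x) ^ 2) = 2 * (∑ y, (P y) ^ 2) + 2 * (∑ y, (Q y) ^ 2) := by
      rw [sum_cons (fun x => (W x) ^ 2), Fintype.sum_bool]
      simp only [Finset.mul_sum, ← Finset.sum_add_distrib]
      refine Finset.sum_congr rfl fun y _ => ?_
      rw [hP, hQ]; ring
    have eT2 : (∑ x, (Tsum ν W x) ^ 2)
        = 2 * (∑ y, (Tsum ν P y) ^ 2) + 2 * ν ^ 2 * (∑ y, (Tsum ν Q y) ^ 2) := by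
      rw [sum_cons (fun x => (Tsum ν W x) ^ 2), Fintype.sum_bool]
      simp only [Finset.mul_sum, ← Finset.sum_add_distrib]
      refine Finset.sum_congr rfl fun y _ => ?_
      rw [hTc true y, hTc false y]
      simp [sgn]
      ring
    have ihP := ih P
    have ihQ := ih Q
    have csQ := csone Q
    have h1 : ν ^ 2 * ((∑ y, (Tsum ν Q y) ^ 2) * 2 ^ n) ≤ ν ^ 2 * ((∑ y, (Q y) ^ 2) * 2 ^ n) := by
      have h2 : (∑ y, (Tsum ν Q y) ^ 2) * 2 ^ n ≤ (∑ y, (Q y) ^ 2) * 2 ^ n := by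
        nlinarith [ihQ, csQ, hν, sq_nonneg ν, mul_nonneg (sub_nonneg.2 hν) (sub_nonneg.2 csQ)]
      exact mul_le_mul_of_nonneg_left h2 (sq_nonneg ν)
    rw [eT2, eW, eW2]
    have hpow : (2:ℝ) ^ (n+1) = 2 * 2 ^ n := by ring
    rw [hpow]
    nlinarith [sq_nonneg ν, ihP]

lemma balanced_count {n : ℕ} (g : Cube n → Bool) (hg : IsBalanced g) (s : Bool) :
    (∑ x : Cube n, (if g x = s then (1:ℝ) else 0)) * 2 = 2 ^ n := by
  rw [Finset.sum_boole]
  cases s with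
  | true =>
    have : ((Finset.univ.filter fun x : Cube n => g x = true).card : ℝ) * 2 = ((2:ℕ) ^ n : ℕ) := by
      rw [← hg]; push_cast; ring
    rw [this]; push_cast; ring
  | false =>
    have hsplit := Finset.card_filter_add_card_filter_not
      (s := (Finset.univ : Finset (Cube n))) (p := fun x => g x = true)
    have hcard : (Finset.univ : Finset (Cube n)).card = 2 ^ n := by
      rw [Finset.card_univ]; simp [Fintype.card_fun]
    have hneg : (Finset.univ.filter fun x : Cube n => ¬ (g x = true)) =
        (Finset.univ.filter fun x : Cube n => g x = false) := by
      apply Finset.filter_congr; intro x _; simp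
    rw [hcard, hneg] at hsplit
    have hgg : 2 * (Finset.univ.filter fun x : Cube n => g x = true).card = 2 ^ n := hg
    have : 2 * (Finset.univ.filter fun x : Cube n => g x = false).card = 2 ^ n := by omega
    have := congrArg (fun m : ℕ => (m : ℝ)) this
    push_cast at this ⊢
    linarith

lemma halfCS {n : ℕ} (g : Cube n → Bool) (hg : IsBalanced g) (s : Bool) (U : Cube n → ℝ)
    (hU : ∀ x, U x = (if g x = s then 1 else 0) * U x) :
    (∑ x, U x) ^ 2 * 2 ≤ (∑ x, (U x) ^ 2) * 2 ^ n := by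
  have cs := Finset.sum_mul_sq_le_sq_mul_sq Finset.univ
    (fun x : Cube n => if g x = s then (1:ℝ) else 0) U
  have h1 : ∑ x : Cube n, (if g x = s then (1:ℝ) else 0) * U x = ∑ x, U x :=
    Finset.sum_congr rfl fun x _ => (hU x).symm
  have h2 : ∑ x : Cube n, (if g x = s then (1:ℝ) else 0) ^ 2
      = ∑ x : Cube n, (if g x = s then (1:ℝ) else 0) :=
    Finset.sum_congr rfl fun x _ => by split_ifs <;> norm_num
  rw [h1, h2] at cs
  have h3 := balanced_count g hg s
  nlinarith [Finset.sum_nonneg (fun x (_ : x ∈ Finset.univ) => sq_nonneg (U x))]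

/-- key one-step contraction -/
lemma claimB {n : ℕ} (η : ℝ) (hη0 : 0 ≤ η) (hη1 : η ≤ 1) (g h : Cube n → Bool)
    (hg : IsBalanced g) (hh : IsBalanced h) (sg sh : Bool) (U : Cube n → ℝ)
    (hU : ∀ x, U x = (if h x = sh then 1 else 0) * U x) :
    ∑ x, ((if g x = sg then 1 else 0) * Tsum η U x) ^ 2
      ≤ (1 / 2 + η / 2) ^ 2 * ∑ x, (U x) ^ 2 := by
  set ν := Real.sqrt η with hνdef
  have hν2 : ν ^ 2 = η := Real.sq_sqrt hη0
  have hν1 : ν ^ 2 ≤ 1 := by rw [hν2]; exact hη1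
  have h2n : (0:ℝ) < 2 ^ n := by positivity
  set Z : Cube n → ℝ := fun x => (if g x = sg then 1 else 0) * Tsum η U x with hZdef
  have hZ : ∀ x, Z x = (if g x = sg then 1 else 0) * Z x := by
    intro x
    by_cases hx : g x = sg <;> simp [hZdef, hx]
  set V : Cube n → ℝ := Tsum ν U with hVdef
  have hTT : ∀ x, Tsum η U x = Tsum ν V x := by
    intro x
    rw [hVdef, Tsum_Tsum, hν2]
  set N := ∑ x, (Z x) ^ 2 with hNdef
  have hN0 : 0 ≤ N := Finset.sum_nonneg fun x _ => sq_nonneg _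
  have hM0 : 0 ≤ ∑ x, (U x) ^ 2 := Finset.sum_nonneg fun x _ => sq_nonneg _
  have e1 : N = ∑ x, Z x * Tsum ν V x := by
    rw [hNdef]
    refine Finset.sum_congr rfl fun x _ => ?_
    rw [sq, ← hTT x]
    by_cases hx : g x = sg <;> simp [hZdef, hx]
  have e2 : N = ∑ x, Tsum ν Z x * V x := by rw [e1, selfadj]
  have cs : N ^ 2 ≤ (∑ x, (Tsum ν Z x) ^ 2) * (∑ x, (V x) ^ 2) := by
    rw [e2]; exact Finset.sum_mul_sq_le_sq_mul_sq _ _ _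
  -- bound on ∑ (Tν Z)²
  have bZ : (∑ x, (Tsum ν Z x) ^ 2) ≤ (1 / 2 + η / 2) * N := by
    have hE := lemE ν hν1 Z
    have hH := halfCS g hg sg Z hZ
    rw [← hNdef] at hE hH
    rw [← mul_le_mul_iff_left₀ h2n]
    calc (∑ x, (Tsum ν Z x) ^ 2) * 2 ^ n
        ≤ (∑ x, Z x) ^ 2 + ν ^ 2 * (N * 2 ^ n - (∑ x, Z x) ^ 2) := hE
      _ ≤ (1 / 2 + η / 2) * N * 2 ^ n := by nlinarith [hH, hν1, hν2, sq_nonneg ν]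
  have bV : (∑ x, (V x) ^ 2) ≤ (1 / 2 + η / 2) * ∑ x, (U x) ^ 2 := by
    have hE := lemE ν hν1 U
    have hH := halfCS h hh sh U hU
    rw [← mul_le_mul_iff_left₀ h2n]
    calc (∑ x, (V x) ^ 2) * 2 ^ n
        ≤ (∑ x, U x) ^ 2 + ν ^ 2 * ((∑ x, (U x) ^ 2) * 2 ^ n - (∑ x, U x) ^ 2) := hE
      _ ≤ (1 / 2 + η / 2) * (∑ x, (U x) ^ 2) * 2 ^ n := by nlinarith [hH, hν1, hν2, sq_nonneg ν]
  have hc0 : (0:ℝ) ≤ 1 / 2 + η / 2 := by linarith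
  have key : N ^ 2 ≤ (1 / 2 + η / 2) ^ 2 * (∑ x, (U x) ^ 2) * N := by
    calc N ^ 2 ≤ (∑ x, (Tsum ν Z x) ^ 2) * (∑ x, (V x) ^ 2) := cs
      _ ≤ ((1 / 2 + η / 2) * N) * ((1 / 2 + η / 2) * ∑ x, (U x) ^ 2) := by
          apply mul_le_mul bZ bV (Finset.sum_nonneg fun x _ => sq_nonneg _)
          positivity
      _ = (1 / 2 + η / 2) ^ 2 * (∑ x, (U x) ^ 2) * N := by ring
  clear_value ν Z V N
  rcases eq_or_lt_of_le hN0 with hN | hN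
  · rw [← hN]
    exact mul_nonneg (sq_nonneg _) hM0
  · rw [sq] at key
    exact le_of_mul_le_mul_right key hN

def Achain {n : ℕ} : (ℓ : ℕ) → (η : Fin ℓ → ℝ) → (f : Fin (ℓ + 1) → Cube n → Bool) →
    Bool → Cube n → ℝ
  | 0, _, f, s => fun x => if f 0 x = s then 1 else 0
  | (ℓ + 1), η, f, s => fun x => (if f 0 x = s then 1 else 0) *
      Tsum (η 0) (Achain ℓ (fun j => η j.succ) (fun j => f j.succ) s) x

lemma A_ind {n : ℕ} (ℓ : ℕ) (η : Fin ℓ → ℝ) (f : Fin (ℓ + 1) → Cube n → Bool) (s : Bool)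
    (x : Cube n) : Achain ℓ η f s x = (if f 0 x = s then 1 else 0) * Achain ℓ η f s x := by
  cases ℓ with
  | zero => by_cases hx : f 0 x = s <;> simp [Achain, hx]
  | succ ℓ => by_cases hx : f 0 x = s <;> simp [Achain, hx]

lemma mainL2 {n : ℕ} (ℓ : ℕ) (η : Fin ℓ → ℝ) (hη : ∀ j, 0 ≤ η j ∧ η j ≤ 1)
    (f : Fin (ℓ + 1) → Cube n → Bool) (hf : ∀ j, IsBalanced (f j)) :
    (∑ x, (Achain ℓ η f true x) ^ 2) + (∑ x, (Achain ℓ η f false x) ^ 2)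
      ≤ 2 ^ n * ∏ j, (1 / 2 + η j / 2) ^ 2 := by
  induction ℓ with
  | zero =>
    simp only [Achain]
    rw [← Finset.sum_add_distrib]
    have h1 : ∀ x : Cube n, (if f 0 x = true then (1:ℝ) else 0) ^ 2
        + (if f 0 x = false then (1:ℝ) else 0) ^ 2 = 1 := by
      intro x
      cases hx : f 0 x <;> simp [hx]
    rw [Finset.sum_congr rfl fun x _ => h1 x]
    rw [Finset.sum_const, Finset.card_univ]
    simp [Fintype.card_fun]
  | succ ℓ ih =>
    have step : ∀ s : Bool, ∑ x, (Achain (ℓ + 1) η f s x) ^ 2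
        ≤ (1 / 2 + η 0 / 2) ^ 2 *
          ∑ x, (Achain ℓ (fun j => η j.succ) (fun j => f j.succ) s x) ^ 2 := by
      intro s
      have := claimB (η 0) (hη 0).1 (hη 0).2 (f 0) (f (Fin.succ 0)) (hf 0) (hf _) s s
        (Achain ℓ (fun j => η j.succ) (fun j => f j.succ) s)
        (fun x => A_ind ℓ (fun j => η j.succ) (fun j => f j.succ) s x)
      simpa [Achain] using this
    have ihh := ih (fun j => η j.succ) (fun j => hη j.succ) (fun j => f j.succ)
      (fun j => hf j.succ)
    have hc : (0:ℝ) ≤ (1 / 2 + η 0 / 2) ^ 2 := sq_nonneg _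
    calc (∑ x, (Achain (ℓ+1) η f true x) ^ 2) + (∑ x, (Achain (ℓ+1) η f false x) ^ 2)
        ≤ (1 / 2 + η 0 / 2) ^ 2 *
            ((∑ x, (Achain ℓ (fun j => η j.succ) (fun j => f j.succ) true x) ^ 2)
              + (∑ x, (Achain ℓ (fun j => η j.succ) (fun j => f j.succ) false x) ^ 2)) := by
          have h1 := step true
          have h2 := step false
          linarith
      _ ≤ (1 / 2 + η 0 / 2) ^ 2 * (2 ^ n * ∏ j : Fin ℓ, (1 / 2 + η j.succ / 2) ^ 2) :=
          mul_le_mul_of_nonneg_left ihh hc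
      _ = 2 ^ n * ∏ j : Fin (ℓ + 1), (1 / 2 + η j / 2) ^ 2 := by
          rw [Fin.prod_univ_succ]
          ring

lemma sum_traj {n : ℕ} (ℓ : ℕ) (η : Fin ℓ → ℝ) (f : Fin (ℓ + 1) → Cube n → Bool)
    (s : Bool) (w : Cube n → ℝ) :
    (∑ x : Fin (ℓ + 1) → Cube n, if (∀ j, f j (x j) = s) then
        w (x 0) * ∏ j : Fin ℓ, corrWeight (η j) (x j.castSucc) (x j.succ) else 0)
      = ∑ x₀ : Cube n, w x₀ * Achain ℓ η f s x₀ := by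
  induction ℓ generalizing w with
  | zero =>
    rw [← (Equiv.funUnique (Fin 1) (Cube n)).symm.sum_comp]
    refine Finset.sum_congr rfl fun x₀ _ => ?_
    have hcond : (∀ j : Fin 1, f j ((Equiv.funUnique (Fin 1) (Cube n)).symm x₀ j) = s)
        ↔ f 0 x₀ = s := by
      constructor
      · intro h; exact h 0
      · intro h j; rw [Subsingleton.elim j 0]; exact h
    by_cases hx : f 0 x₀ = s
    · rw [if_pos (hcond.2 hx)]
      simp [Achain, hx, Equiv.funUnique]
    · rw [if_neg (fun h => hx (hcond.1 h))]
      simp [Achain, hx]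
  | succ ℓ ih =>
    rw [sum_cons (fun x : Fin (ℓ + 2) → Cube n => if (∀ j, f j (x j) = s) then
        w (x 0) * ∏ j : Fin (ℓ + 1), corrWeight (η j) (x j.castSucc) (x j.succ) else 0)]
    have inner : ∀ x₀ : Cube n,
        (∑ x' : Fin (ℓ + 1) → Cube n, if (∀ j, f j ((Fin.cons x₀ x' : Fin (ℓ+2) → Cube n) j) = s) then
          w ((Fin.cons x₀ x' : Fin (ℓ+2) → Cube n) 0) *
            ∏ j : Fin (ℓ + 1), corrWeight (η j) ((Fin.cons x₀ x' : Fin (ℓ+2) → Cube n) j.castSucc)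
              ((Fin.cons x₀ x' : Fin (ℓ+2) → Cube n) j.succ) else 0)
        = w x₀ * Achain (ℓ + 1) η f s x₀ := by
      intro x₀
      have hcond : ∀ x' : Fin (ℓ + 1) → Cube n,
          (∀ j, f j ((Fin.cons x₀ x' : Fin (ℓ+2) → Cube n) j) = s)
            ↔ (f 0 x₀ = s ∧ ∀ j : Fin (ℓ + 1), f j.succ (x' j) = s) := by
        intro x'
        rw [Fin.forall_fin_succ]
        simp [Fin.cons_zero, Fin.cons_succ]
      have hprod : ∀ x' : Fin (ℓ + 1) → Cube n,
          (∏ j : Fin (ℓ + 1), corrWeight (η j) ((Fin.cons x₀ x' : Fin (ℓ+2) → Cube n) j.castSucc)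
              ((Fin.cons x₀ x' : Fin (ℓ+2) → Cube n) j.succ))
            = corrWeight (η 0) x₀ (x' 0) *
              ∏ j : Fin ℓ, corrWeight (η j.succ) (x' j.castSucc) (x' j.succ) := by
        intro x'
        rw [Fin.prod_univ_succ]
        refine congrArg₂ (· * ·) ?_ ?_
        · simp
        · refine Finset.prod_congr rfl fun j _ => ?_
          rw [← Fin.succ_castSucc]
          simp [Fin.cons_succ]
      by_cases hx : f 0 x₀ = s
      · have e1 : (∑ x' : Fin (ℓ + 1) → Cube n,
            if (∀ j, f j ((Fin.cons x₀ x' : Fin (ℓ+2) → Cube n) j) = s) then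
              w ((Fin.cons x₀ x' : Fin (ℓ+2) → Cube n) 0) *
                ∏ j : Fin (ℓ + 1), corrWeight (η j) ((Fin.cons x₀ x' : Fin (ℓ+2) → Cube n) j.castSucc)
                  ((Fin.cons x₀ x' : Fin (ℓ+2) → Cube n) j.succ) else 0)
            = ∑ x' : Fin (ℓ + 1) → Cube n, (if (∀ j : Fin (ℓ + 1), f j.succ (x' j) = s) then
                (w x₀ * corrWeight (η 0) x₀ (x' 0)) *
                  ∏ j : Fin ℓ, corrWeight (η j.succ) (x' j.castSucc) (x' j.succ) else 0) := by
          refine Finset.sum_congr rfl fun x' _ => ?_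
          rw [hprod x']
          by_cases ht : ∀ j : Fin (ℓ + 1), f j.succ (x' j) = s
          · rw [if_pos ((hcond x').2 ⟨hx, ht⟩), if_pos ht]
            simp only [Fin.cons_zero]
            ring
          · rw [if_neg (fun hall => ht ((hcond x').1 hall).2), if_neg ht]
        rw [e1, ih (fun j => η j.succ) (fun j => f j.succ) (fun y => w x₀ * corrWeight (η 0) x₀ y)]
        simp only [Achain, if_pos hx, one_mul]
        unfold Tsum
        rw [Finset.mul_sum]
        refine Finset.sum_congr rfl fun y _ => ?_
        ring
      · have e0 : (∑ x' : Fin (ℓ + 1) → Cube n,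
            if (∀ j, f j ((Fin.cons x₀ x' : Fin (ℓ+2) → Cube n) j) = s) then
              w ((Fin.cons x₀ x' : Fin (ℓ+2) → Cube n) 0) *
                ∏ j : Fin (ℓ + 1), corrWeight (η j) ((Fin.cons x₀ x' : Fin (ℓ+2) → Cube n) j.castSucc)
                  ((Fin.cons x₀ x' : Fin (ℓ+2) → Cube n) j.succ) else 0) = 0 := by
          refine Finset.sum_eq_zero fun x' _ => ?_
          rw [if_neg (fun hall => hx ((hcond x').1 hall).1)]
        rw [e0]
        simp [Achain, hx]
    rw [Finset.sum_congr rfl fun x₀ _ => inner x₀]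

lemma A_dict {n : ℕ} (ℓ : ℕ) (η : Fin ℓ → ℝ) (i : Fin n) (s : Bool) (x : Cube n) :
    Achain ℓ η (fun _ y => y i) s x
      = (if x i = s then 1 else 0) * ∏ j, (1 / 2 + η j / 2) := by
  induction ℓ generalizing x with
  | zero => simp [Achain]
  | succ ℓ ih =>
    show (if x i = s then (1:ℝ) else 0) * Tsum (η 0)
        (Achain ℓ (fun j => η j.succ) (fun _ y => y i) s) x = _
    have hT : Tsum (η 0) (Achain ℓ (fun j => η j.succ) (fun _ y => y i) s) x
        = (1 / 2 + η 0 / 2 * sgn (x i) * sgn s) * ∏ j : Fin ℓ, (1 / 2 + η j.succ / 2) := by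
      unfold Tsum
      have : ∀ y : Cube n, corrWeight (η 0) x y * Achain ℓ (fun j => η j.succ) (fun _ y => y i) s y
          = (corrWeight (η 0) x y * (if y i = s then 1 else 0)) * ∏ j : Fin ℓ, (1 / 2 + η j.succ / 2) := by
        intro y
        rw [ih]
        ring
      rw [Finset.sum_congr rfl fun y _ => this y, ← Finset.sum_mul, halfrow]
    rw [hT, Fin.prod_univ_succ]
    by_cases hx : x i = s
    · rw [if_pos hx, hx]
      have hss : sgn s * sgn s = 1 := by cases s <;> simp [sgn]
      rw [mul_assoc (η 0 / 2), hss, mul_one]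
    · rw [if_neg hx]
      ring

lemma cond_split {n : ℕ} (ℓ : ℕ) (f : Fin (ℓ + 1) → Cube n → Bool)
    (x : Fin (ℓ + 1) → Cube n) (c : ℝ) :
    (if (∀ j, f j (x j) = f 0 (x 0)) then c else 0)
      = (if (∀ j, f j (x j) = true) then c else 0)
        + (if (∀ j, f j (x j) = false) then c else 0) := by
  by_cases ht : ∀ j, f j (x j) = true
  · have h0 : f 0 (x 0) = true := ht 0
    rw [if_pos (fun j => by rw [ht j, h0]), if_pos ht,
      if_neg (fun hff : ∀ j, f j (x j) = false => by
        have := hff 0; rw [h0] at this; simp at this), add_zero]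
  · by_cases hff : ∀ j, f j (x j) = false
    · have h0 : f 0 (x 0) = false := hff 0
      rw [if_pos (fun j => by rw [hff j, h0]), if_pos hff, if_neg ht, zero_add]
    · rw [if_neg ht, if_neg hff, add_zero]
      rw [if_neg]
      intro hall
      cases h0 : f 0 (x 0) with
      | true => exact ht (fun j => by rw [hall j, h0])
      | false => exact hff (fun j => by rw [hall j, h0])

/-- general sum computation: the agreement sum equals expectation of Achain true + false. -/
lemma sum_eq {n : ℕ} (ℓ : ℕ) (η : Fin ℓ → ℝ) (f : Fin (ℓ + 1) → Cube n → Bool) :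
    (∑ x : Fin (ℓ + 1) → Cube n,
        if (∀ j, f j (x j) = f 0 (x 0)) then
          (∏ j : Fin ℓ, corrWeight (η j) (x j.castSucc) (x j.succ)) / 2 ^ n else 0)
      = ((∑ x₀ : Cube n, Achain ℓ η f true x₀) + ∑ x₀ : Cube n, Achain ℓ η f false x₀) / 2 ^ n := by
  have step1 : ∀ x : Fin (ℓ + 1) → Cube n,
      (if (∀ j, f j (x j) = f 0 (x 0)) then
          (∏ j : Fin ℓ, corrWeight (η j) (x j.castSucc) (x j.succ)) / 2 ^ n else 0)
        = ((if (∀ j, f j (x j) = true) then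
              (1:ℝ) * ∏ j : Fin ℓ, corrWeight (η j) (x j.castSucc) (x j.succ) else 0)
          + (if (∀ j, f j (x j) = false) then
              (1:ℝ) * ∏ j : Fin ℓ, corrWeight (η j) (x j.castSucc) (x j.succ) else 0)) / 2 ^ n := by
    intro x
    rw [← cond_split ℓ f x]
    split_ifs <;> simp
  rw [Finset.sum_congr rfl fun x _ => step1 x, ← Finset.sum_div, Finset.sum_add_distrib]
  rw [sum_traj ℓ η f true (fun _ => 1), sum_traj ℓ η f false (fun _ => 1)]
  simp only [one_mul]

end NICD

open NICD

/-- **Optimality of dictators for NICD on the path.** Let `ρ ∈ (0,1)`, `n, ℓ ≥ 1`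
and `d_1, …, d_ℓ ≥ 1`. Let `z_0, …, z_ℓ` be the path-indexed Markov chain on
`{-1,1}^n` where `z_0` is uniform and `z_j` is a `ρ^{d_j}`-correlated copy of
`z_{j-1}`, so the joint probability of a trajectory `x` is
`2^{-n} ∏_j ∏_i (1/2 + (ρ^{d_j}/2) x_{j-1,i} x_{j,i})`. Then for all balanced
`f_0, …, f_ℓ : {-1,1}^n → {-1,1}`:
`Pr[f_0(z_0) = ⋯ = f_ℓ(z_ℓ)] ≤ ∏_j (1/2 + ρ^{d_j}/2)`, with equality when all `f_j`
equal the same dictator `x ↦ x_i`. -/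
theorem path_dictators_optimal (ρ : ℝ) (hρ0 : 0 < ρ) (hρ1 : ρ < 1)
    (n ℓ : ℕ) (hn : 1 ≤ n) (hℓ : 1 ≤ ℓ) (d : Fin ℓ → ℕ) (hd : ∀ j, 1 ≤ d j) :
    (∀ f : Fin (ℓ + 1) → (Fin n → Bool) → Bool, (∀ j, IsBalanced (f j)) →
      (∑ x : Fin (ℓ + 1) → Fin n → Bool,
          if ∀ j, f j (x j) = f 0 (x 0) then
            (∏ j : Fin ℓ, corrWeight (ρ ^ d j) (x j.castSucc) (x j.succ)) / 2 ^ n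
          else 0) ≤
        ∏ j : Fin ℓ, (1 / 2 + ρ ^ d j / 2)) ∧
    (∀ i : Fin n,
      (∑ x : Fin (ℓ + 1) → Fin n → Bool,
          if ∀ j, x j i = x 0 i then
            (∏ j : Fin ℓ, corrWeight (ρ ^ d j) (x j.castSucc) (x j.succ)) / 2 ^ n
          else 0) =
        ∏ j : Fin ℓ, (1 / 2 + ρ ^ d j / 2)) := by
  have h2n : (0:ℝ) < 2 ^ n := by positivity
  have hη : ∀ j : Fin ℓ, 0 ≤ ρ ^ d j ∧ ρ ^ d j ≤ 1 :=
    fun j => ⟨(pow_pos hρ0 _).le, pow_le_one₀ hρ0.le hρ1.le⟩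
  have hP0 : (0:ℝ) ≤ ∏ j : Fin ℓ, (1 / 2 + ρ ^ d j / 2) :=
    Finset.prod_nonneg fun j _ => by have := (hη j).1; linarith
  constructor
  · intro f hf
    rw [sum_eq ℓ (fun j => ρ ^ d j) f, div_le_iff₀ h2n]
    have hmain := mainL2 ℓ (fun j => ρ ^ d j) hη f hf
    have cross : ∑ x : Cube n, Achain ℓ (fun j => ρ ^ d j) f true x *
        Achain ℓ (fun j => ρ ^ d j) f false x = 0 := by
      refine Finset.sum_eq_zero fun x _ => ?_
      rw [A_ind ℓ _ f true x, A_ind ℓ _ f false x]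
      cases hx : f 0 x <;> simp [hx]
    have cs := csone (fun x : Cube n => Achain ℓ (fun j => ρ ^ d j) f true x
        + Achain ℓ (fun j => ρ ^ d j) f false x)
    have expand : ∑ x : Cube n, (Achain ℓ (fun j => ρ ^ d j) f true x
        + Achain ℓ (fun j => ρ ^ d j) f false x) ^ 2
        = (∑ x, (Achain ℓ (fun j => ρ ^ d j) f true x) ^ 2)
          + (∑ x, (Achain ℓ (fun j => ρ ^ d j) f false x) ^ 2)
          + 2 * ∑ x : Cube n, Achain ℓ (fun j => ρ ^ d j) f true x *
              Achain ℓ (fun j => ρ ^ d j) f false x := by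
      rw [Finset.mul_sum, ← Finset.sum_add_distrib, ← Finset.sum_add_distrib]
      exact Finset.sum_congr rfl fun x _ => by ring
    have hsum : ∑ x : Cube n, (Achain ℓ (fun j => ρ ^ d j) f true x
        + Achain ℓ (fun j => ρ ^ d j) f false x)
        = (∑ x₀ : Cube n, Achain ℓ (fun j => ρ ^ d j) f true x₀)
          + ∑ x₀ : Cube n, Achain ℓ (fun j => ρ ^ d j) f false x₀ := Finset.sum_add_distrib
    rw [hsum, expand, cross] at cs
    have hprodsq : (∏ j : Fin ℓ, (1 / 2 + ρ ^ d j / 2) ^ 2)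
        = (∏ j : Fin ℓ, (1 / 2 + ρ ^ d j / 2)) ^ 2 := by rw [Finset.prod_pow]
    rw [hprodsq] at hmain
    have hfin : ((∑ x₀ : Cube n, Achain ℓ (fun j => ρ ^ d j) f true x₀)
        + ∑ x₀ : Cube n, Achain ℓ (fun j => ρ ^ d j) f false x₀) ^ 2
        ≤ ((∏ j : Fin ℓ, (1 / 2 + ρ ^ d j / 2)) * 2 ^ n) ^ 2 := by
      calc ((∑ x₀ : Cube n, Achain ℓ (fun j => ρ ^ d j) f true x₀)
          + ∑ x₀ : Cube n, Achain ℓ (fun j => ρ ^ d j) f false x₀) ^ 2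
          ≤ ((∑ x, (Achain ℓ (fun j => ρ ^ d j) f true x) ^ 2)
            + (∑ x, (Achain ℓ (fun j => ρ ^ d j) f false x) ^ 2) + 2 * 0) * 2 ^ n := cs
        _ = ((∑ x, (Achain ℓ (fun j => ρ ^ d j) f true x) ^ 2)
            + (∑ x, (Achain ℓ (fun j => ρ ^ d j) f false x) ^ 2)) * 2 ^ n := by ring
        _ ≤ (2 ^ n * (∏ j : Fin ℓ, (1 / 2 + ρ ^ d j / 2)) ^ 2) * 2 ^ n :=
            mul_le_mul_of_nonneg_right hmain h2n.le
        _ = ((∏ j : Fin ℓ, (1 / 2 + ρ ^ d j / 2)) * 2 ^ n) ^ 2 := by ring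
    have hR0 : (0:ℝ) ≤ (∏ j : Fin ℓ, (1 / 2 + ρ ^ d j / 2)) * 2 ^ n :=
      mul_nonneg hP0 h2n.le
    nlinarith [hfin, hR0]
  · intro i
    have heq : (∑ x : Fin (ℓ + 1) → Fin n → Bool,
        if ∀ j, x j i = x 0 i then
          (∏ j : Fin ℓ, corrWeight (ρ ^ d j) (x j.castSucc) (x j.succ)) / 2 ^ n
        else 0)
        = ((∑ x₀ : Cube n, Achain ℓ (fun j => ρ ^ d j) (fun _ y => y i) true x₀)
          + ∑ x₀ : Cube n, Achain ℓ (fun j => ρ ^ d j) (fun _ y => y i) false x₀) / 2 ^ n :=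
      sum_eq ℓ (fun j => ρ ^ d j) (fun _ y => y i)
    rw [heq]
    have hval : ∀ s : Bool, (∑ x₀ : Cube n, Achain ℓ (fun j => ρ ^ d j) (fun _ y => y i) s x₀)
        = (∑ x₀ : Cube n, (if x₀ i = s then (1:ℝ) else 0)) * ∏ j : Fin ℓ, (1 / 2 + ρ ^ d j / 2) := by
      intro s
      rw [Finset.sum_congr rfl fun x (_ : x ∈ Finset.univ) =>
        A_dict ℓ (fun j => ρ ^ d j) i s x, ← Finset.sum_mul]
    rw [hval true, hval false, ← add_mul, ← Finset.sum_add_distrib]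
    have hones : ∑ x₀ : Cube n, ((if x₀ i = true then (1:ℝ) else 0)
        + (if x₀ i = false then (1:ℝ) else 0)) = 2 ^ n := by
      have h1 : ∀ x₀ : Cube n, (if x₀ i = true then (1:ℝ) else 0)
          + (if x₀ i = false then (1:ℝ) else 0) = 1 := by
        intro x₀; cases hx : x₀ i <;> simp [hx]
      rw [Finset.sum_congr rfl fun x _ => h1 x, Finset.sum_const, Finset.card_univ]
      simp [Fintype.card_fun]
    rw [hones]
    field_simp
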